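/- Let G be a finite simple graph and let G' be obtained from G by splitting each vertex u into a family of 'mininodes' that partition the edges incident to u (each edge of G corresponds to exactly one edge of G' between the corresponding mininodes of its endpoints). If M' is a maximal matching of G', and M is the corresponding edge set in G, then M is a k-matching of G, where k is the maximum number of mininodes into which any vertex is split. -/

import Mathlib

variable {V : Type*}

/-- The number of edges of `M` incident to the vertex `v`. -/
noncomputable def degOn (M : Set (Sym2 V)) (v : V) : ℕ := {e ∈ M | v ∈ e}.ncard

/-- `M` is a matching of `G`: a set of edges of `G` that are pairwise non-adjacent,
i.e. every vertex is incident to at most one edge of `M`. -/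
def IsMatchingSet (G : SimpleGraph V) (M : Set (Sym2 V)) : Prop :=
  M ⊆ G.edgeSet ∧ ∀ v, degOn M v ≤ 1

/-- `M` is a maximal matching of `G`: no edge of `G` can be added to `M`
while keeping it a matching. -/
def IsMaximalMatchingSet (G : SimpleGraph V) (M : Set (Sym2 V)) : Prop :=
  IsMatchingSet G M ∧ ∀ e ∈ G.edgeSet, IsMatchingSet G (insert e M) → e ∈ M

/-- `M` is a `k`-matching of `G`: every vertex is incident to at most `k` edges of `M`,
and every vertex incident to no edge of `M` has all its neighbors incident to
at least one edge of `M`. -/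
def IsKMatching (G : SimpleGraph V) (k : ℕ) (M : Set (Sym2 V)) : Prop :=
  M ⊆ G.edgeSet ∧ (∀ v, degOn M v ≤ k) ∧
    ∀ v, degOn M v = 0 → ∀ w, G.Adj v w → 1 ≤ degOn M w

/-!
The image `M` of a maximal matching `M'` of `G'` is a `k`-matching of `G`. Each edge of `M` at `v`
comes from an edge of `M'` at some mininode of `v`, and distinct edges of `M'` at `v` use distinct
mininodes because `M'` is a matching, so `v` meets at most `k` edges of `M`. If an edge `vw` of `G`
had both endpoints uncovered by `M`, the corresponding edge of `G'` would have both endpoints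
uncovered by `M'`, and maximality would put it into `M'`, hence `vw` into `M`.
-/

theorem Set.ncard_le_ncard_of_forall_subsingleton {α β : Type*} {s : Set α} {t : Set β}
    (r : α → β → Prop) (ht : t.Finite) (hs : ∀ a ∈ s, ∃ b ∈ t, r a b)
    (hst : ∀ b ∈ t, {a ∈ s | r a b}.Subsingleton) : s.ncard ≤ t.ncard := by
  obtain hs' | hs' := s.finite_or_infinite
  · lift s to Finset α using hs'
    lift t to Finset β using ht
    simp only [Set.ncard_coe_finset]
    exact Finset.card_le_card_of_forall_subsingleton r hs hst
  · simp [hs'.ncard]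

section matching

variable {M : Set (Sym2 V)} {v : V}

theorem degOn_pos_iff (hM : M.Finite) : 0 < degOn M v ↔ ∃ e ∈ M, v ∈ e :=
  Set.ncard_pos (hM.subset (Set.sep_subset _ _))

theorem eq_of_degOn_le_one (hM : M.Finite) (h : degOn M v ≤ 1) {e f : Sym2 V} (he : e ∈ M)
    (hf : f ∈ M) (hve : v ∈ e) (hvf : v ∈ f) : e = f :=
  (Set.ncard_le_one_iff (hM.subset (Set.sep_subset _ _))).1 h ⟨he, hve⟩ ⟨hf, hvf⟩

theorem IsMatchingSet.insert_of_forall_notMem {G : SimpleGraph V} {e : Sym2 V}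
    (hM : IsMatchingSet G M) (he : e ∈ G.edgeSet) (hfree : ∀ u ∈ e, ∀ f ∈ M, u ∉ f) :
    IsMatchingSet G (insert e M) := by
  refine ⟨Set.insert_subset he hM.1, fun u => ?_⟩
  by_cases hu : u ∈ e
  · have : {x ∈ insert e M | u ∈ x} = {e} := by
      ext x
      simp only [Set.mem_ofPred_eq, Set.mem_insert_iff, Set.mem_singleton_iff]
      grind
    rw [degOn, this, Set.ncard_singleton]
  · have : {x ∈ insert e M | u ∈ x} = {x ∈ M | u ∈ x} := by
      ext x
      simp only [Set.mem_ofPred_eq, Set.mem_insert_iff]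
      grind
    exact (congrArg Set.ncard this).trans_le (hM.2 u)

theorem IsMaximalMatchingSet.mem_of_forall_notMem {G : SimpleGraph V} {e : Sym2 V}
    (hM : IsMaximalMatchingSet G M) (he : e ∈ G.edgeSet)
    (hfree : ∀ u ∈ e, ∀ f ∈ M, u ∉ f) : e ∈ M :=
  hM.2 e he (hM.1.insert_of_forall_notMem he hfree)

end matching

section image

variable {V' : Type*} {φ : V' → V} {M' : Set (Sym2 V')}

theorem degOn_image_map_le_ncard [Finite V'] (hM' : ∀ v', degOn M' v' ≤ 1) (v : V) :
    degOn (Sym2.map φ '' M') v ≤ {v' | φ v' = v}.ncard := by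
  refine Set.ncard_le_ncard_of_forall_subsingleton
    (fun e v' => ∃ e' ∈ M', v' ∈ e' ∧ Sym2.map φ e' = e) (Set.toFinite _) ?_ ?_
  · rintro _ ⟨⟨e', he', rfl⟩, hv⟩
    obtain ⟨v', hv', rfl⟩ := Sym2.mem_map.1 hv
    exact ⟨v', rfl, e', he', hv', rfl⟩
  · rintro v' - _ ⟨-, e₁, he₁, hv₁, rfl⟩ _ ⟨-, e₂, he₂, hv₂, rfl⟩
    rw [eq_of_degOn_le_one M'.toFinite (hM' v') he₁ he₂ hv₁ hv₂]

theorem IsMaximalMatchingSet.exists_mem_image_of_adj {G : SimpleGraph V} {G' : SimpleGraph V'}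
    (hsurj : Set.SurjOn (Sym2.map φ) G'.edgeSet G.edgeSet) (hM' : IsMaximalMatchingSet G' M')
    {v w : V} (hvw : G.Adj v w) : ∃ e ∈ Sym2.map φ '' M', v ∈ e ∨ w ∈ e := by
  obtain ⟨e', he', hmap⟩ := hsurj (G.mem_edgeSet.2 hvw)
  by_contra! hfree
  have he'M' : e' ∈ M' := by
    refine hM'.mem_of_forall_notMem he' fun u hu f hf huf => ?_
    have hφu : φ u ∈ Sym2.map φ f := Sym2.mem_map.2 ⟨u, huf, rfl⟩
    have hφu_eq : φ u = v ∨ φ u = w := by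
      rw [← Sym2.mem_iff, ← hmap]
      exact Sym2.mem_map.2 ⟨u, hu, rfl⟩
    obtain h | h := hφu_eq <;> rw [h] at hφu
    exacts [(hfree _ ⟨f, hf, rfl⟩).1 hφu, (hfree _ ⟨f, hf, rfl⟩).2 hφu]
  exact (hfree _ ⟨e', he'M', hmap⟩).1 (Sym2.mem_mk_left v w)

end image

theorem stmt_13_general {V' : Type*} [Fintype V']
    (G : SimpleGraph V) (G' : SimpleGraph V') (φ : V' → V) (k : ℕ)
    (hbij : Set.BijOn (Sym2.map φ) G'.edgeSet G.edgeSet)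
    (hfib : ∀ v : V, {v' : V' | φ v' = v}.ncard ≤ k)
    (M' : Set (Sym2 V')) (hM' : IsMaximalMatchingSet G' M') :
    IsKMatching G k (Sym2.map φ '' M') := by
  have hM : (Sym2.map φ '' M').Finite := M'.toFinite.image _
  refine ⟨(hbij.mapsTo.mono_left hM'.1.1).image_subset,
    fun v => (degOn_image_map_le_ncard hM'.1.2 v).trans (hfib v), ?_⟩
  intro v hv w hvw
  obtain ⟨e, he, hve | hwe⟩ := hM'.exists_mem_image_of_adj hbij.surjOn hvw
  · exact absurd hv ((degOn_pos_iff hM).2 ⟨e, he, hve⟩).ne'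
  · exact (degOn_pos_iff hM).2 ⟨e, he, hwe⟩

theorem stmt_13 {V' : Type*} [Fintype V] [Fintype V']
    (G : SimpleGraph V) (G' : SimpleGraph V') (φ : V' → V) (k : ℕ)
    (hbij : Set.BijOn (Sym2.map φ) G'.edgeSet G.edgeSet)
    (hfib : ∀ v : V, {v' : V' | φ v' = v}.ncard ≤ k)
    (M' : Set (Sym2 V')) (hM' : IsMaximalMatchingSet G' M') :
    IsKMatching G k (Sym2.map φ '' M') :=
  stmt_13_general G G' φ k hbij hfib M' hM'
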